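/- Let B ⊆ A be rings, α an automorphism of A, β an automorphism of B. If the induction functor A ⊗_B − is right adjoint to the twisted restriction functor _β A_α ⊗_A −, with unit η : A → A ⊗_B (_β A_α) and counit ε : (_β A_α) ⊗_A A → B satisfying the triangle identities, then, writing η(1) = Σ_i y'_i ⊗ x_i and defining tr(a) = ε(a ⊗ 1), the elements {x_i} and {y_i := α(y'_i)} are dual sets of generators: a = Σ_i β(tr(a y_i)) x_i = Σ_i α^{-1}(y_i) tr(x_i α(a)) for all a ∈ A. In particular A is an (α,β)-Frobenius extension of B. -/

import Mathlib

/-!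
The first triangle identity says that `a ↦ (β (ε(a ⊗ y' i)))ᵢ` and `c ↦ Σ cᵢ xᵢ` split `A` off
the free module `Bⁿ`; together with the second it makes `{y' i}`, `{x i}` a dual pair for `ε`.
Balancing `ε` over `A` moves `α (y' i)` across, `tr (a α (y' i)) = ε(a ⊗ y' i)`, which gives the
stated formulas.  The map `a ↦ ε(− ⊗ a)` is the required isomorphism onto `Hom_B(_β A_α, B)`:
the second triangle identity makes it injective, and the first writes any twisted-linear `f`
as `ε(− ⊗ Σ y' i f(x i))`.
-/

section

variable {A : Type u} [Ring A] (B : Subring A) (α : A ≃+* A) (β : B ≃+* B)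

/-- `A` is an `(α,β)`-Frobenius extension of `B`: `A` is finitely generated projective as
a left `B`-module and there is an `(A,B)`-bimodule isomorphism `A ≅ Hom_B(_β A_α, B)`. -/
def IsTwistedFrobeniusExtension : Prop :=
  Module.Finite B A ∧ Module.Projective B A ∧
    ∃ Φ : A → A →+ B,
      (∀ a a' : A, Φ (a + a') = Φ a + Φ a') ∧
      (∀ (a : A) (b : B) (x : A), Φ a ((β b : A) * x) = b * Φ a x) ∧
      (∀ (a a' x : A), Φ (a' * a) x = Φ a (x * α a')) ∧
      (∀ (a : A) (b : B) (x : A), Φ (a * (b : A)) x = Φ a x * b) ∧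
      (∀ a : A, (∀ x : A, Φ a x = 0) → a = 0) ∧
      (∀ f : A →+ B, (∀ (b : B) (x : A), f ((β b : A) * x) = b * f x) →
        ∃ a : A, ∀ x : A, f x = Φ a x)

theorem Module.finite_projective_of_dual_basis {R M ι : Type*} [Ring R] [AddCommGroup M]
    [Module R M] [Fintype ι] (x : ι → M) (c : M →ₗ[R] ι → R)
    (hc : ∀ m, ∑ i, c m i • x i = m) : Module.Finite R M ∧ Module.Projective R M := by
  have hc' : ∀ m, Fintype.linearCombination R x (c m) = m := fun m => by
    simpa [Fintype.linearCombination_apply] using hc m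
  exact ⟨.of_surjective _ fun m => ⟨c m, hc' m⟩,
    .of_split c (Fintype.linearCombination R x) (LinearMap.ext hc')⟩

section DualBasis

variable {B α β} {e : A →+ A →+ B}

theorem balanced_apply_mul_one (hebal : ∀ z a w : A, e (z * α a) w = e z (a * w))
    (z a : A) : e (z * α a) 1 = e z a := by
  rw [hebal, mul_one]

variable {ι : Type*} [Fintype ι] {y' x : ι → A}

def dualCoord (heB : ∀ (b : B) (z w : A), e ((β b : A) * z) w = b * e z w) (y' : ι → A) :
    A →ₗ[B] ι → B where
  toFun a i := β (e a (y' i))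
  map_add' a a' := by ext i; simp
  map_smul' b a := by
    ext i
    obtain ⟨b, rfl⟩ := β.surjective b
    simp [Subring.smul_def, heB]

theorem finite_projective_of_dual_basis
    (heB : ∀ (b : B) (z w : A), e ((β b : A) * z) w = b * e z w)
    (htri₁ : ∀ a : A, a = ∑ i, ((β (e a (y' i)) : B) : A) * x i) :
    Module.Finite B A ∧ Module.Projective B A :=
  Module.finite_projective_of_dual_basis x (dualCoord heB y') fun a => (htri₁ a).symm

theorem eq_zero_of_forall_pairing_eq_zero
    (htri₂ : ∀ a : A, a = ∑ i, y' i * ((e (x i) a : B) : A)) {a : A} (ha : ∀ z, e z a = 0) :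
    a = 0 := by
  rw [htri₂ a]
  simp [ha]

theorem exists_eq_pairing_of_twisted_linear
    (heB' : ∀ (b : B) (z w : A), e z (w * (b : A)) = e z w * b)
    (htri₁ : ∀ a : A, a = ∑ i, ((β (e a (y' i)) : B) : A) * x i)
    (f : A →+ B) (hf : ∀ (b : B) (z : A), f ((β b : A) * z) = b * f z) :
    ∃ a : A, ∀ z, f z = e z a := by
  refine ⟨∑ i, y' i * (f (x i) : A), fun z => ?_⟩
  calc f z = ∑ i, e z (y' i) * f (x i) := by
        conv_lhs => rw [htri₁ z]
        simp only [map_sum, hf]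
    _ = e z (∑ i, y' i * (f (x i) : A)) := by simp only [map_sum, heB']

end DualBasis

theorem twisted_frobenius_of_adjunction
    (e : A →+ A →+ B)
    (hebal : ∀ (z a w : A), e (z * α a) w = e z (a * w))
    (heB : ∀ (b : B) (z w : A), e ((β b : A) * z) w = b * e z w)
    (heB' : ∀ (b : B) (z w : A), e z (w * (b : A)) = e z w * b)
    (n : ℕ) (y' x : Fin n → A)
    -- the two triangle identities:
    (htri₁ : ∀ a : A, a = ∑ i, ((β (e a (y' i)) : B) : A) * x i)
    (htri₂ : ∀ a : A, a = ∑ i, y' i * ((e (x i) a : B) : A)) :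
    -- {x i} and {y i := α (y' i)} are dual sets of generators for tr a := e a 1:
    (∀ a : A, a = ∑ i, ((β (e (a * α (y' i)) 1) : B) : A) * x i) ∧
    (∀ a : A, a = ∑ i, α.symm (α (y' i)) * ((e (x i * α a) 1 : B) : A)) ∧
    IsTwistedFrobeniusExtension B α β := by
  obtain ⟨hfin, hproj⟩ := finite_projective_of_dual_basis heB htri₁
  refine ⟨fun a => ?_, fun a => ?_, hfin, hproj, e.flip, map_add e.flip,
    fun a b z => heB b z a, fun a a' z => (hebal z a' a).symm, fun a b z => heB' b z a,
    fun _ => eq_zero_of_forall_pairing_eq_zero htri₂,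
    fun f hf => exists_eq_pairing_of_twisted_linear heB' htri₁ f hf⟩
  · simpa only [balanced_apply_mul_one hebal] using htri₁ a
  · simpa only [balanced_apply_mul_one hebal, α.symm_apply_apply] using htri₂ a

end
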